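/- (Post-processing bound at α = 1: quantization does not worsen the Gaussian privacy budget.) The Kullback–Leibler divergence between the quantized-Gaussian pmfs at the extreme inputs is at most the KL divergence between the underlying Gaussians: ∑_{r=0}^{k−1} P_{C_q/2}(r)·log(P_{C_q/2}(r)/P_{−C_q/2}(r)) ≤ C_q²/(2σ²). -/

import Mathlib

open MeasureTheory Real

/-- Density of the normal distribution `N(x, σ²)`. -/
noncomputable def gpdf (σ x t : ℝ) : ℝ :=
  (1 / (σ * Real.sqrt (2 * Real.pi))) * Real.exp (-(t - x) ^ 2 / (2 * σ ^ 2))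

/-- Quantization levels `B(r) = -C_q + r · δ`, with `δ = 2·C_q/(k-1)`. -/
noncomputable def Blev (Cq : ℝ) (k : ℕ) (r : ℕ) : ℝ :=
  -Cq + (r : ℝ) * (2 * Cq / ((k : ℝ) - 1))

/-- The quantized-Gaussian pmf `P_x(r)` on `{0, 1, …, k-1}`. -/
noncomputable def qgPmf (Cq σ : ℝ) (k : ℕ) (x : ℝ) (r : ℕ) : ℝ :=
  if r = 0 then
    (∫ t in Set.Iic (Blev Cq k 0), gpdf σ x t)
      + ∫ t in (Blev Cq k 0)..(Blev Cq k 1),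
          gpdf σ x t * (Blev Cq k 1 - t) / (2 * Cq / ((k : ℝ) - 1))
  else if r = k - 1 then
    (∫ t in (Blev Cq k (k - 2))..(Blev Cq k (k - 1)),
        gpdf σ x t * (t - Blev Cq k (k - 2)) / (2 * Cq / ((k : ℝ) - 1)))
      + ∫ t in Set.Ici (Blev Cq k (k - 1)), gpdf σ x t
  else
    (∫ t in (Blev Cq k (r - 1))..(Blev Cq k r),
        gpdf σ x t * (t - Blev Cq k (r - 1)) / (2 * Cq / ((k : ℝ) - 1)))
      + ∫ t in (Blev Cq k r)..(Blev Cq k (r + 1)),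
          gpdf σ x t * (Blev Cq k (r + 1) - t) / (2 * Cq / ((k : ℝ) - 1))

/-!
Stochastic rounding writes `P_x(r) = ∫ f_x w_r` with weights `w_r ≥ 0` summing to one. With
`f = f_{C_q/2}` and `g = f_{-C_q/2}`, in each bucket `log y ≤ y - 1` gives the log-sum inequality
`P(r) log (P(r) / Q(r)) ≤ ∫ f w_r log (f / g)`. Summing over `r` leaves `∫ f log (f / g)`, the
divergence of the two Gaussians; since `log (f / g)` is linear in `t`, it equals `C_q² / (2σ²)`.
-/

open ProbabilityTheory Set

section LogSum

variable {α : Type*} [MeasurableSpace α] {μ : Measure α} {f g : α → ℝ}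

lemma sub_le_mul_log_div {x y : ℝ} (hx : 0 < x) (hy : 0 < y) : x - y ≤ x * log (x / y) := by
  have h := one_sub_inv_le_log_of_pos (div_pos hx hy)
  rw [inv_div] at h
  calc x - y = x * (1 - y / x) := by field_simp
    _ ≤ x * log (x / y) := mul_le_mul_of_nonneg_left h hx.le

theorem mul_log_le_integral_mul_log {w : α → ℝ} (hf : ∀ t, 0 < f t) (hg : ∀ t, 0 < g t)
    (hw : ∀ t, 0 ≤ w t) (hfw : Integrable (fun t ↦ f t * w t) μ)
    (hgw : Integrable (fun t ↦ g t * w t) μ)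
    (hfwL : Integrable (fun t ↦ f t * w t * log (f t / g t)) μ)
    (ha : 0 < ∫ t, f t * w t ∂μ) (hb : 0 < ∫ t, g t * w t ∂μ) :
    (∫ t, f t * w t ∂μ) * log ((∫ t, f t * w t ∂μ) / ∫ t, g t * w t ∂μ)
      ≤ ∫ t, f t * w t * log (f t / g t) ∂μ := by
  set a := ∫ t, f t * w t ∂μ
  set b := ∫ t, g t * w t ∂μ
  -- `log y ≤ y - 1` against `(a / b) • g`, which has the same `w`-weighted mass as `f`
  have hpt : ∀ t, f t * w t - a / b * (g t * w t)
      ≤ f t * w t * log (f t / g t) - log (a / b) * (f t * w t) := fun t ↦ by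
    have h := sub_le_mul_log_div (hf t) (mul_pos (div_pos ha hb) (hg t))
    rw [div_mul_eq_div_div_swap, log_div (div_pos (hf t) (hg t)).ne' (div_pos ha hb).ne'] at h
    nlinarith [mul_le_mul_of_nonneg_right h (hw t)]
  have h : ∫ t, f t * w t - a / b * (g t * w t) ∂μ
      ≤ ∫ t, f t * w t * log (f t / g t) - log (a / b) * (f t * w t) ∂μ :=
    integral_mono (hfw.sub (hgw.const_mul _)) (hfwL.sub (hfw.const_mul _)) hpt
  rw [integral_sub hfw (hgw.const_mul _), integral_sub hfwL (hfw.const_mul _),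
    integral_const_mul, integral_const_mul, div_mul_cancel₀ _ hb.ne'] at h
  linarith

theorem sum_mul_log_le_integral_mul_log {ι : Type*} (s : Finset ι) (w : ι → α → ℝ)
    (hf : ∀ t, 0 < f t) (hg : ∀ t, 0 < g t) (hf_int : Integrable f μ) (hg_int : Integrable g μ)
    (hfL : Integrable (fun t ↦ f t * log (f t / g t)) μ)
    (hw_meas : ∀ i ∈ s, AEStronglyMeasurable (w i) μ) (hw : ∀ i ∈ s, ∀ t, 0 ≤ w i t)
    (hw_sum : ∀ t, ∑ i ∈ s, w i t = 1)
    (hP : ∀ i ∈ s, 0 < ∫ t, f t * w i t ∂μ) (hQ : ∀ i ∈ s, 0 < ∫ t, g t * w i t ∂μ) :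
    ∑ i ∈ s, (∫ t, f t * w i t ∂μ) * log ((∫ t, f t * w i t ∂μ) / ∫ t, g t * w i t ∂μ)
      ≤ ∫ t, f t * log (f t / g t) ∂μ := by
  have hw_le : ∀ i ∈ s, ∀ᵐ t ∂μ, ‖w i t‖ ≤ 1 := fun i hi ↦ ae_of_all _ fun t ↦ by
    rw [Real.norm_of_nonneg (hw i hi t), ← hw_sum t]
    exact Finset.single_le_sum (fun j hj ↦ hw j hj t) hi
  have hfwL : ∀ i ∈ s, Integrable (fun t ↦ f t * w i t * log (f t / g t)) μ := fun i hi ↦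
    (hfL.bdd_mul (hw_meas i hi) (hw_le i hi)).congr (ae_of_all _ fun t ↦ by ring)
  calc ∑ i ∈ s, (∫ t, f t * w i t ∂μ) * log ((∫ t, f t * w i t ∂μ) / ∫ t, g t * w i t ∂μ)
      ≤ ∑ i ∈ s, ∫ t, f t * w i t * log (f t / g t) ∂μ := Finset.sum_le_sum fun i hi ↦
        mul_log_le_integral_mul_log hf hg (hw i hi) (hf_int.mul_bdd (hw_meas i hi) (hw_le i hi))
          (hg_int.mul_bdd (hw_meas i hi) (hw_le i hi)) (hfwL i hi) (hP i hi) (hQ i hi)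
    _ = ∫ t, ∑ i ∈ s, f t * w i t * log (f t / g t) ∂μ := (integral_finsetSum s hfwL).symm
    _ = ∫ t, f t * log (f t / g t) ∂μ := by
        congr 1 with t
        rw [← Finset.sum_mul, ← Finset.mul_sum, hw_sum, mul_one]

end LogSum

lemma indicator_one_le_one (s : Set ℝ) (t : ℝ) : s.indicator (1 : ℝ → ℝ) t ≤ 1 :=
  indicator_apply_le' (fun _ ↦ le_rfl) fun _ ↦ zero_le_one

lemma sum_indicator_Ioc_of_monotone {α M : Type*} [LinearOrder α] [AddCommMonoid M] {b : ℕ → α}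
    (hb : Monotone b) (φ : α → M) (n : ℕ) (t : α) :
    ∑ j ∈ Finset.range n, (Ioc (b j) (b (j + 1))).indicator φ t
      = (Ioc (b 0) (b n)).indicator φ t := by
  induction n with
  | zero => simp
  | succ n ih =>
    rw [Finset.sum_range_succ, ih, ← Ioc_union_Ioc_eq_Ioc (hb (Nat.zero_le n)) (hb n.le_succ),
      indicator_union_of_disjoint (Ioc_disjoint_Ioc_of_le le_rfl)]

lemma indicator_Iic_add_Ioc_add_Ioi {a b : ℝ} (hab : a ≤ b) (t : ℝ) :
    (Iic a).indicator 1 t + (Ioc a b).indicator 1 t + (Ioi b).indicator 1 t = (1 : ℝ) := by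
  simp only [indicator_apply, mem_Iic, mem_Ioc, mem_Ioi, Pi.one_apply]
  split_ifs <;> grind

lemma integral_mul_indicator_Ioc {F φ : ℝ → ℝ} {a b : ℝ} (hab : a ≤ b) :
    ∫ t, F t * (Ioc a b).indicator φ t = ∫ t in a..b, F t * φ t := by
  simp_rw [← indicator_mul_right]
  rw [integral_indicator measurableSet_Ioc, intervalIntegral.integral_of_le hab]

lemma integral_mul_indicator_one {F : ℝ → ℝ} {s : Set ℝ} (hs : MeasurableSet s) :
    ∫ t, F t * s.indicator 1 t = ∫ t in s, F t := by
  simp_rw [← indicator_mul_right, Pi.one_apply, mul_one]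
  exact integral_indicator hs

lemma integral_mul_pos_of_pos_on_Ioo {f w : ℝ → ℝ} (hf : ∀ t, 0 < f t) (hw : ∀ t, 0 ≤ w t)
    (hfw : Integrable fun t ↦ f t * w t) {a b : ℝ} (hab : a < b)
    (hw_pos : ∀ t ∈ Ioo a b, 0 < w t) : 0 < ∫ t, f t * w t := by
  rw [integral_pos_iff_support_of_nonneg (fun t ↦ mul_nonneg (hf t).le (hw t)) hfw]
  refine (measure_mono fun t ht ↦ (mul_pos (hf t) (hw_pos t ht)).ne').trans_lt' ?_
  rw [Real.volume_Ioo]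
  exact ENNReal.ofReal_pos.mpr (sub_pos.mpr hab)

section Gaussian

variable {σ : ℝ}

lemma gpdf_eq_gaussianPDFReal (hσ : 0 ≤ σ) (x : ℝ) :
    gpdf σ x = gaussianPDFReal x (σ ^ 2).toNNReal := by
  ext t
  rw [gpdf, gaussianPDFReal_def, coe_toNNReal _ (sq_nonneg σ), sqrt_mul' _ (sq_nonneg σ),
    sqrt_sq hσ, one_div, mul_comm σ]

lemma gpdf_pos (hσ : 0 < σ) (x t : ℝ) : 0 < gpdf σ x t := by
  unfold gpdf; positivity

lemma integrable_gpdf (hσ : 0 ≤ σ) (x : ℝ) : Integrable (gpdf σ x) := by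
  rw [gpdf_eq_gaussianPDFReal hσ]
  exact integrable_gaussianPDFReal _ _

lemma integrable_gpdf_mul (hσ : 0 ≤ σ) (x : ℝ) {w : ℝ → ℝ} (hw_meas : Measurable w)
    (hw : ∀ t, 0 ≤ w t) (hw_le : ∀ t, w t ≤ 1) : Integrable fun t ↦ gpdf σ x t * w t :=
  (integrable_gpdf hσ x).mul_bdd hw_meas.aestronglyMeasurable
    (ae_of_all _ fun t ↦ by rw [Real.norm_of_nonneg (hw t)]; exact hw_le t)

lemma integrable_mul_gpdf (hσ : 0 < σ) (x : ℝ) : Integrable fun t ↦ t * gpdf σ x t := by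
  have hv : (σ ^ 2).toNNReal ≠ 0 := (toNNReal_pos.mpr (pow_pos hσ 2)).ne'
  have h := (memLp_one_iff_integrable.mp (memLp_id_gaussianReal (μ := x) (v := (σ ^ 2).toNNReal) 1))
  rw [gaussianReal_of_var_ne_zero _ hv, integrable_withDensity_iff_integrable_smul'
    (measurable_gaussianPDF _ _) (ae_of_all _ fun _ ↦ gaussianPDF_lt_top)] at h
  simpa [toReal_gaussianPDF, gpdf_eq_gaussianPDFReal hσ.le, mul_comm] using h

lemma integral_mul_gpdf (hσ : 0 < σ) (x : ℝ) : ∫ t, t * gpdf σ x t = x := by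
  have hv : (σ ^ 2).toNNReal ≠ 0 := (toNNReal_pos.mpr (pow_pos hσ 2)).ne'
  have h := integral_gaussianReal_eq_integral_smul (μ := x) (f := fun t ↦ t) hv
  rw [integral_id_gaussianReal] at h
  simpa [gpdf_eq_gaussianPDFReal hσ.le, mul_comm] using h.symm

lemma log_gpdf_div_gpdf (hσ : 0 < σ) (a b t : ℝ) :
    log (gpdf σ a t / gpdf σ b t) = ((t - b) ^ 2 - (t - a) ^ 2) / (2 * σ ^ 2) := by
  have hc : 0 < 1 / (σ * sqrt (2 * π)) := by positivity
  rw [gpdf, gpdf, mul_div_mul_left _ _ hc.ne', ← exp_sub, log_exp]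
  ring

lemma gpdf_mul_log_div_gpdf (hσ : 0 < σ) (a b t : ℝ) :
    gpdf σ a t * log (gpdf σ a t / gpdf σ b t)
      = (a - b) / σ ^ 2 * (t * gpdf σ a t) + (b ^ 2 - a ^ 2) / (2 * σ ^ 2) * gpdf σ a t := by
  rw [log_gpdf_div_gpdf hσ]
  field_simp
  ring

lemma integrable_gpdf_mul_log_div_gpdf (hσ : 0 < σ) (a b : ℝ) :
    Integrable fun t ↦ gpdf σ a t * log (gpdf σ a t / gpdf σ b t) := by
  simp_rw [gpdf_mul_log_div_gpdf hσ]
  exact ((integrable_mul_gpdf hσ a).const_mul _).add ((integrable_gpdf hσ.le a).const_mul _)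

lemma integral_gpdf_mul_log_div_gpdf (hσ : 0 < σ) (a b : ℝ) :
    ∫ t, gpdf σ a t * log (gpdf σ a t / gpdf σ b t) = (a - b) ^ 2 / (2 * σ ^ 2) := by
  have hv : (σ ^ 2).toNNReal ≠ 0 := (toNNReal_pos.mpr (pow_pos hσ 2)).ne'
  simp_rw [gpdf_mul_log_div_gpdf hσ]
  rw [integral_add ((integrable_mul_gpdf hσ a).const_mul _) ((integrable_gpdf hσ.le a).const_mul _),
    integral_const_mul, integral_const_mul, integral_mul_gpdf hσ, gpdf_eq_gaussianPDFReal hσ.le,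
    integral_gaussianPDFReal_eq_one _ hv]
  field_simp
  ring

end Gaussian

section Quantization

variable {Cq σ : ℝ} {k : ℕ}

lemma Blev_succ (j : ℕ) : Blev Cq k (j + 1) = Blev Cq k j + 2 * Cq / ((k : ℝ) - 1) := by
  unfold Blev; push_cast; ring

lemma quantStep_pos (hC : 0 < Cq) (hk : 1 < k) : 0 < 2 * Cq / ((k : ℝ) - 1) := by
  have : (1 : ℝ) < k := by exact_mod_cast hk
  exact div_pos (by positivity) (by linarith)

lemma strictMono_Blev (hC : 0 < Cq) (hk : 1 < k) : StrictMono (Blev Cq k) :=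
  strictMono_nat_of_lt_succ fun j ↦ by rw [Blev_succ]; linarith [quantStep_pos hC hk]

noncomputable def rampUp (Cq : ℝ) (k j : ℕ) : ℝ → ℝ :=
  (Ioc (Blev Cq k j) (Blev Cq k (j + 1))).indicator
    fun t ↦ (t - Blev Cq k j) / (2 * Cq / ((k : ℝ) - 1))

noncomputable def rampDown (Cq : ℝ) (k j : ℕ) : ℝ → ℝ :=
  (Ioc (Blev Cq k j) (Blev Cq k (j + 1))).indicator
    fun t ↦ (Blev Cq k (j + 1) - t) / (2 * Cq / ((k : ℝ) - 1))

/-- The probability that stochastic rounding sends `t` to the level `r`. Half-open pieces are used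
so that `Iic`, `Ioc`, `Ioi` partition `ℝ`; the endpoints are null sets for the integrals. -/
noncomputable def quantWeight (Cq : ℝ) (k r : ℕ) (t : ℝ) : ℝ :=
  (if r = 0 then (Iic (Blev Cq k 0)).indicator 1 t else rampUp Cq k (r - 1) t) +
    (if r = k - 1 then (Ioi (Blev Cq k (k - 1))).indicator 1 t else rampDown Cq k r t)

lemma measurable_rampUp (j : ℕ) : Measurable (rampUp Cq k j) :=
  (measurable_id.sub_const _).div_const _ |>.indicator measurableSet_Ioc

lemma measurable_rampDown (j : ℕ) : Measurable (rampDown Cq k j) :=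
  (measurable_const.sub measurable_id).div_const _ |>.indicator measurableSet_Ioc

lemma measurable_quantWeight (r : ℕ) : Measurable (quantWeight Cq k r) := by
  unfold quantWeight
  refine Measurable.add ?_ ?_ <;> split_ifs
  · exact measurable_one.indicator measurableSet_Iic
  · exact measurable_rampUp _
  · exact measurable_one.indicator measurableSet_Ioi
  · exact measurable_rampDown _

variable (hC : 0 < Cq) (hk : 1 < k)
include hC hk

lemma rampUp_nonneg (j : ℕ) (t : ℝ) : 0 ≤ rampUp Cq k j t :=
  indicator_nonneg (fun s hs ↦ div_nonneg (by linarith [hs.1]) (quantStep_pos hC hk).le) t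

lemma rampDown_nonneg (j : ℕ) (t : ℝ) : 0 ≤ rampDown Cq k j t :=
  indicator_nonneg (fun s hs ↦ div_nonneg (by linarith [hs.2]) (quantStep_pos hC hk).le) t

lemma rampUp_pos {j : ℕ} {t : ℝ} (ht : t ∈ Ioo (Blev Cq k j) (Blev Cq k (j + 1))) :
    0 < rampUp Cq k j t := by
  rw [rampUp, indicator_of_mem (Ioo_subset_Ioc_self ht)]
  exact div_pos (by linarith [ht.1]) (quantStep_pos hC hk)

lemma rampDown_pos {j : ℕ} {t : ℝ} (ht : t ∈ Ioo (Blev Cq k j) (Blev Cq k (j + 1))) :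
    0 < rampDown Cq k j t := by
  rw [rampDown, indicator_of_mem (Ioo_subset_Ioc_self ht)]
  exact div_pos (by linarith [ht.2]) (quantStep_pos hC hk)

lemma rampUp_add_rampDown (j : ℕ) (t : ℝ) :
    rampUp Cq k j t + rampDown Cq k j t
      = (Ioc (Blev Cq k j) (Blev Cq k (j + 1))).indicator 1 t := by
  have h_sum : t - Blev Cq k j + (Blev Cq k (j + 1) - t) = 2 * Cq / ((k : ℝ) - 1) := by
    rw [Blev_succ]; ring
  simp only [rampUp, rampDown, indicator_apply, Pi.one_apply]
  split_ifs
  · rw [← add_div, h_sum, div_self (quantStep_pos hC hk).ne']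
  · simp

lemma rampUp_le_one (j : ℕ) (t : ℝ) : rampUp Cq k j t ≤ 1 := by
  linarith [rampUp_add_rampDown hC hk j t, rampDown_nonneg hC hk j t,
    indicator_one_le_one (Ioc (Blev Cq k j) (Blev Cq k (j + 1))) t]

lemma rampDown_le_one (j : ℕ) (t : ℝ) : rampDown Cq k j t ≤ 1 := by
  linarith [rampUp_add_rampDown hC hk j t, rampUp_nonneg hC hk j t,
    indicator_one_le_one (Ioc (Blev Cq k j) (Blev Cq k (j + 1))) t]

lemma quantWeight_nonneg (r : ℕ) (t : ℝ) : 0 ≤ quantWeight Cq k r t := by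
  unfold quantWeight
  refine add_nonneg ?_ ?_ <;> split_ifs
  · exact indicator_nonneg (fun _ _ ↦ zero_le_one) t
  · exact rampUp_nonneg hC hk _ t
  · exact indicator_nonneg (fun _ _ ↦ zero_le_one) t
  · exact rampDown_nonneg hC hk _ t

lemma sum_quantWeight (t : ℝ) : ∑ r ∈ Finset.range k, quantWeight Cq k r t = 1 := by
  obtain ⟨n, rfl⟩ : ∃ n, k = n + 1 := ⟨k - 1, by omega⟩
  have h_up : ∑ r ∈ Finset.range (n + 1),
      (if r = 0 then (Iic (Blev Cq (n + 1) 0)).indicator 1 t else rampUp Cq (n + 1) (r - 1) t)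
      = (Iic (Blev Cq (n + 1) 0)).indicator 1 t + ∑ j ∈ Finset.range n, rampUp Cq (n + 1) j t := by
    rw [Finset.sum_range_succ', if_pos rfl, add_comm]
    simp
  have h_down : ∑ r ∈ Finset.range (n + 1), (if r = n + 1 - 1 then
        (Ioi (Blev Cq (n + 1) (n + 1 - 1))).indicator 1 t else rampDown Cq (n + 1) r t)
      = ∑ j ∈ Finset.range n, rampDown Cq (n + 1) j t
          + (Ioi (Blev Cq (n + 1) n)).indicator 1 t := by
    rw [Finset.sum_range_succ, Nat.add_sub_cancel, if_pos rfl]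
    congr 1
    exact Finset.sum_congr rfl fun j hj ↦ if_neg (Finset.mem_range.mp hj).ne
  simp only [quantWeight, Finset.sum_add_distrib, h_up, h_down]
  rw [add_assoc, ← add_assoc (∑ j ∈ _, _), ← Finset.sum_add_distrib]
  simp only [rampUp_add_rampDown hC hk]
  rw [sum_indicator_Ioc_of_monotone (strictMono_Blev hC hk).monotone, ← add_assoc]
  exact indicator_Iic_add_Ioc_add_Ioi ((strictMono_Blev hC hk).monotone (Nat.zero_le n)) t

lemma quantWeight_le_one {r : ℕ} (hr : r < k) (t : ℝ) : quantWeight Cq k r t ≤ 1 :=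
  sum_quantWeight hC hk t ▸ Finset.single_le_sum (fun j _ ↦ quantWeight_nonneg hC hk j t)
    (Finset.mem_range.mpr hr)

lemma exists_Ioo_forall_quantWeight_pos (r : ℕ) :
    ∃ a b, a < b ∧ ∀ t ∈ Ioo a b, 0 < quantWeight Cq k r t := by
  have hB := strictMono_Blev hC hk
  by_cases h_last : r = k - 1
  · refine ⟨Blev Cq k (r - 1), Blev Cq k (r - 1 + 1), hB (Nat.lt_succ_self _), fun t ht ↦ ?_⟩
    rw [quantWeight, if_neg (by omega), if_pos h_last]
    exact add_pos_of_pos_of_nonneg (rampUp_pos hC hk ht)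
      (indicator_nonneg (fun _ _ ↦ zero_le_one) t)
  · refine ⟨Blev Cq k r, Blev Cq k (r + 1), hB (Nat.lt_succ_self _), fun t ht ↦ ?_⟩
    rw [quantWeight, if_neg h_last]
    refine add_pos_of_nonneg_of_pos ?_ (rampDown_pos hC hk ht)
    split_ifs
    exacts [indicator_nonneg (fun _ _ ↦ zero_le_one) t, rampUp_nonneg hC hk _ t]

lemma integral_mul_rampUp (F : ℝ → ℝ) (j : ℕ) :
    ∫ t, F t * rampUp Cq k j t
      = ∫ t in (Blev Cq k j)..(Blev Cq k (j + 1)),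
          F t * (t - Blev Cq k j) / (2 * Cq / ((k : ℝ) - 1)) := by
  rw [rampUp, integral_mul_indicator_Ioc ((strictMono_Blev hC hk).monotone j.le_succ)]
  simp_rw [mul_div_assoc']

lemma integral_mul_rampDown (F : ℝ → ℝ) (j : ℕ) :
    ∫ t, F t * rampDown Cq k j t
      = ∫ t in (Blev Cq k j)..(Blev Cq k (j + 1)),
          F t * (Blev Cq k (j + 1) - t) / (2 * Cq / ((k : ℝ) - 1)) := by
  rw [rampDown, integral_mul_indicator_Ioc ((strictMono_Blev hC hk).monotone j.le_succ)]
  simp_rw [mul_div_assoc']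

lemma qgPmf_eq_integral (hσ : 0 < σ) (x : ℝ) (r : ℕ) :
    qgPmf Cq σ k x r = ∫ t, gpdf σ x t * quantWeight Cq k r t := by
  have h_ind : ∀ {s : Set ℝ}, MeasurableSet s → Integrable fun t ↦ gpdf σ x t * s.indicator 1 t :=
    fun hs ↦ integrable_gpdf_mul hσ.le x (measurable_one.indicator hs)
      (indicator_nonneg fun _ _ ↦ zero_le_one)
      (indicator_one_le_one _)
  have h_up : ∀ j, Integrable fun t ↦ gpdf σ x t * rampUp Cq k j t := fun j ↦
    integrable_gpdf_mul hσ.le x (measurable_rampUp j) (rampUp_nonneg hC hk j)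
      (rampUp_le_one hC hk j)
  have h_down : ∀ j, Integrable fun t ↦ gpdf σ x t * rampDown Cq k j t := fun j ↦
    integrable_gpdf_mul hσ.le x (measurable_rampDown j) (rampDown_nonneg hC hk j)
      (rampDown_le_one hC hk j)
  unfold qgPmf quantWeight
  split_ifs with h0 h_last h_last
  · omega
  · subst h0
    simp only [mul_add]
    rw [integral_add (h_ind measurableSet_Iic) (h_down 0),
      integral_mul_indicator_one measurableSet_Iic, integral_mul_rampDown hC hk]
  · subst h_last
    simp only [mul_add]
    rw [integral_add (h_up _) (h_ind measurableSet_Ioi),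
      integral_mul_indicator_one measurableSet_Ioi,
      integral_mul_rampUp hC hk, integral_Ici_eq_integral_Ioi, show k - 1 - 1 = k - 2 by omega,
      show k - 2 + 1 = k - 1 by omega]
  · simp only [mul_add]
    rw [integral_add (h_up _) (h_down _), integral_mul_rampUp hC hk, integral_mul_rampDown hC hk,
      Nat.sub_add_cancel (Nat.one_le_iff_ne_zero.mpr h0)]

lemma qgPmf_pos (hσ : 0 < σ) (x : ℝ) {r : ℕ} (hr : r < k) : 0 < qgPmf Cq σ k x r := by
  obtain ⟨a, b, hab, h_pos⟩ := exists_Ioo_forall_quantWeight_pos hC hk r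
  rw [qgPmf_eq_integral hC hk hσ]
  exact integral_mul_pos_of_pos_on_Ioo (gpdf_pos hσ x) (quantWeight_nonneg hC hk r)
    (integrable_gpdf_mul hσ.le x (measurable_quantWeight r) (quantWeight_nonneg hC hk r)
      (quantWeight_le_one hC hk hr)) hab h_pos

end Quantization

/-- Post-processing bound at `α = 1`: the KL divergence between the quantized-Gaussian
pmfs at the extreme inputs is at most the KL divergence `C_q²/(2σ²)` between the
underlying Gaussians. -/
theorem quantGauss_kl_le_gaussian_budget (Cq σ : ℝ) (hC : 0 < Cq) (hσ : 0 < σ)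
    (k : ℕ) (hk : 2 ≤ k) :
    ∑ r ∈ Finset.range k,
        qgPmf Cq σ k (Cq / 2) r *
          Real.log (qgPmf Cq σ k (Cq / 2) r / qgPmf Cq σ k (-(Cq / 2)) r)
      ≤ Cq ^ 2 / (2 * σ ^ 2) := by
  have hk₁ : 1 < k := hk
  have hP (x : ℝ) (r : ℕ) := qgPmf_eq_integral hC hk₁ hσ x r
  have h_pos (x : ℝ) : ∀ r ∈ Finset.range k, 0 < ∫ t, gpdf σ x t * quantWeight Cq k r t :=
    fun r hr ↦ hP x r ▸ qgPmf_pos hC hk₁ hσ x (Finset.mem_range.mp hr)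
  have h_dpi := sum_mul_log_le_integral_mul_log (Finset.range k) (quantWeight Cq k)
    (gpdf_pos hσ (Cq / 2)) (gpdf_pos hσ (-(Cq / 2))) (integrable_gpdf hσ.le _)
    (integrable_gpdf hσ.le _) (integrable_gpdf_mul_log_div_gpdf hσ _ _)
    (fun r _ ↦ (measurable_quantWeight r).aestronglyMeasurable)
    (fun r _ ↦ quantWeight_nonneg hC hk₁ r) (sum_quantWeight hC hk₁) (h_pos _) (h_pos _)
  simp only [← hP] at h_dpi
  rwa [integral_gpdf_mul_log_div_gpdf hσ, show Cq / 2 - -(Cq / 2) = Cq by ring] at h_dpi
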